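/- arXiv:2504.16016 — 3 statements merged into one kernel-verified Lean document; each statement's English description precedes it below -/
import Mathlib

section
/- Let E be a finite-dimensional real inner product space and let F, G ∈ E be nonzero vectors. Then the gradient of the map F ↦ Sim(F, G) at F satisfies the norm bound ‖∇_F Sim(F, G)‖ ≤ 2/‖F‖. -/
open scoped InnerProductSpace

/-!
Write `Sim(v) = ⟪v, G⟫ * (‖v‖ * ‖G‖)⁻¹`. Away from `0` the norm has derivative
`⟪x, ·⟫ / ‖x‖`, so the chain and product rules give the gradient
`G / (‖F‖ ‖G‖) - ⟪F, G⟫ / (‖F‖³ ‖G‖) • F`. Each of the two terms has norm at most `1 / ‖F‖`,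
the second by Cauchy–Schwarz.
-/

section

variable {E : Type*} [NormedAddCommGroup E] [InnerProductSpace ℝ E]

theorem hasFDerivAt_norm_of_ne_zero {x : E} (hx : x ≠ 0) :
    HasFDerivAt (fun v : E => ‖v‖) (‖x‖⁻¹ • innerSL ℝ x) x := by
  have hsqrt : HasFDerivAt (fun v : E => √(‖v‖ ^ 2))
      ((1 / (2 * √(‖x‖ ^ 2))) • (2 • innerSL ℝ x)) x :=
    (hasStrictFDerivAt_norm_sq x).hasFDerivAt.sqrt (by positivity)
  simp only [Real.sqrt_sq (norm_nonneg _)] at hsqrt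
  refine hsqrt.congr_fderiv ?_
  ext w
  simp only [smul_apply, coe_innerSL_apply, smul_eq_mul, one_div,
    mul_inv_rev, nsmul_eq_mul, Nat.cast_ofNat]
  field_simp

theorem hasGradientAt_inner_div_norm_mul_norm [CompleteSpace E] {F G : E} (hF : F ≠ 0)
    (hG : G ≠ 0) :
    HasGradientAt (fun v : E => ⟪v, G⟫_ℝ / (‖v‖ * ‖G‖))
      ((‖F‖ * ‖G‖)⁻¹ • G - (⟪F, G⟫_ℝ / (‖F‖ ^ 3 * ‖G‖)) • F) F := by
  have hden : ‖F‖ * ‖G‖ ≠ 0 := by positivity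
  have hinv := (hasDerivAt_inv hden).comp_hasFDerivAt F
    ((hasFDerivAt_norm_of_ne_zero hF).mul_const ‖G‖)
  have hprod := ((innerSL ℝ G).hasFDerivAt (x := F)).mul hinv
  have hfun : (fun v : E => ⟪v, G⟫_ℝ / (‖v‖ * ‖G‖)) =
      ⇑(innerSL ℝ G) * ((fun t => t⁻¹) ∘ fun v => ‖v‖ * ‖G‖) := by
    ext v
    simp [div_eq_mul_inv, real_inner_comm]
  rw [hasGradientAt_iff_hasFDerivAt, hfun]
  refine hprod.congr_fderiv ?_
  ext w
  simp only [coe_innerSL_apply, real_inner_comm, neg_smul, smul_neg, Function.comp_apply,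
    mul_inv_rev, add_apply, neg_apply,
    smul_apply, smul_eq_mul, map_sub, map_smul,
    sub_apply, InnerProductSpace.toDual_apply_apply]
  field_simp
  ring

theorem norm_sub_smul_le_two_div_norm {F G : E} (hF : F ≠ 0) (hG : G ≠ 0) :
    ‖(‖F‖ * ‖G‖)⁻¹ • G - (⟪F, G⟫_ℝ / (‖F‖ ^ 3 * ‖G‖)) • F‖ ≤ 2 / ‖F‖ := by
  have hFpos : 0 < ‖F‖ := norm_pos_iff.mpr hF
  have hGpos : 0 < ‖G‖ := norm_pos_iff.mpr hG
  calc _ ≤ ‖(‖F‖ * ‖G‖)⁻¹ • G‖ + ‖(⟪F, G⟫_ℝ / (‖F‖ ^ 3 * ‖G‖)) • F‖ := norm_sub_le _ _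
    _ = 1 / ‖F‖ + |⟪F, G⟫_ℝ| / (‖F‖ ^ 2 * ‖G‖) := by
      rw [norm_smul, norm_smul, Real.norm_eq_abs, Real.norm_eq_abs, abs_div, abs_inv,
        abs_of_pos (by positivity : 0 < ‖F‖ ^ 3 * ‖G‖),
        abs_of_pos (by positivity : 0 < ‖F‖ * ‖G‖)]
      field_simp
    _ ≤ 1 / ‖F‖ + ‖F‖ * ‖G‖ / (‖F‖ ^ 2 * ‖G‖) := by gcongr; exact abs_real_inner_le_norm F G
    _ = 2 / ‖F‖ := by field_simp; ring

end

/-- For nonzero `F, G` in a finite-dimensional real inner product space,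
the gradient of the cosine-similarity map `F ↦ ⟪F, G⟫ / (‖F‖ * ‖G‖)` at `F` has norm
at most `2 / ‖F‖`. -/
theorem stmt_1 {E : Type*} [NormedAddCommGroup E] [InnerProductSpace ℝ E]
    [FiniteDimensional ℝ E] (F G : E) (hF : F ≠ 0) (hG : G ≠ 0) :
    ‖gradient (fun v : E => ⟪v, G⟫_ℝ / (‖v‖ * ‖G‖)) F‖ ≤ 2 / ‖F‖ := by
  rw [(hasGradientAt_inner_div_norm_mul_norm hF hG).gradient]
  exact norm_sub_smul_le_two_div_norm hF hG
end

section
/- Let E be a finite-dimensional real inner product space, let M > 0, and let F, G ∈ E be nonzero vectors with ‖F‖ ≥ M. Then the gradient of the map F ↦ Sim(F, G) at F satisfies ‖∇_F Sim(F, G)‖ ≤ 2/M. -/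
/-!
The gradient of `x ↦ ⟪x, G⟫ / ‖x‖` at `v ≠ 0` is `‖v‖⁻¹` times the component of `G` orthogonal
to `v`. Orthogonal projection is a contraction, so after dividing by `‖G‖` the gradient of the
cosine similarity has norm at most `‖F‖⁻¹ ≤ 1 / M`, which is even better than `2 / M`.
-/

open scoped InnerProductSpace

section

variable {E : Type*} [NormedAddCommGroup E] [InnerProductSpace ℝ E]

theorem hasFDerivAt_norm {v : E} (hv : v ≠ 0) :
    HasFDerivAt (fun x : E => ‖x‖) (‖v‖⁻¹ • innerSL ℝ v) v := by
  have h := (hasStrictFDerivAt_norm_sq v).hasFDerivAt.sqrt (by simpa using hv)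
  simp only [Real.sqrt_sq (norm_nonneg _)] at h
  convert h using 1
  ext w
  simp only [smul_apply, coe_innerSL_apply, smul_eq_mul, one_div, mul_inv_rev, nsmul_eq_mul,
    Nat.cast_ofNat]
  field_simp

theorem hasFDerivAt_inner_div_norm (G : E) {v : E} (hv : v ≠ 0) :
    HasFDerivAt (fun x : E => ⟪x, G⟫_ℝ / ‖x‖)
      (‖v‖⁻¹ • innerSL ℝ ((ℝ ∙ v)ᗮ.starProjection G)) v := by
  have hinner : HasFDerivAt (fun x : E => ⟪x, G⟫_ℝ) (innerSL ℝ G) v :=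
    (innerSL ℝ G).hasFDerivAt.congr_of_eventuallyEq (.of_forall fun x => real_inner_comm G x)
  have hinv := (hasDerivAt_inv (norm_ne_zero_iff.2 hv)).comp_hasFDerivAt v (hasFDerivAt_norm hv)
  refine (hinner.mul hinv).congr_fderiv ?_
  ext w
  simp only [Function.comp_apply, add_apply, smul_apply, coe_innerSL_apply, smul_eq_mul,
    Submodule.starProjection_orthogonal_val, Submodule.starProjection_singleton, inner_sub_left,
    inner_smul_left, real_inner_comm, Real.ringHom_apply]
  field_simp
  ring

theorem hasGradientAt_cosineSimilarity [CompleteSpace E] (G : E) {v : E} (hv : v ≠ 0) :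
    HasGradientAt (fun x : E => ⟪x, G⟫_ℝ / (‖x‖ * ‖G‖))
      ((‖v‖ * ‖G‖)⁻¹ • (ℝ ∙ v)ᗮ.starProjection G) v := by
  rw [hasGradientAt_iff_hasFDerivAt]
  refine (((hasFDerivAt_inner_div_norm G hv).const_smul ‖G‖⁻¹).congr_fderiv ?_)
    |>.congr_of_eventuallyEq (.of_forall fun x => ?_)
  · ext w
    simp only [InnerProductSpace.toDual_apply_apply, smul_apply, coe_innerSL_apply, smul_eq_mul,
      inner_smul_left, mul_inv, Real.ringHom_apply]
    ring
  · simp only [Pi.smul_apply, smul_eq_mul]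
    ring

theorem norm_gradient_cosineSimilarity_le [CompleteSpace E] (G : E) {v : E} (hv : v ≠ 0) :
    ‖gradient (fun x : E => ⟪x, G⟫_ℝ / (‖x‖ * ‖G‖)) v‖ ≤ ‖v‖⁻¹ := by
  rw [(hasGradientAt_cosineSimilarity G hv).gradient, norm_smul, norm_inv, norm_mul, norm_norm,
    norm_norm, mul_inv]
  calc ‖v‖⁻¹ * ‖G‖⁻¹ * ‖(ℝ ∙ v)ᗮ.starProjection G‖ ≤ ‖v‖⁻¹ * (‖G‖⁻¹ * ‖G‖) := by
        rw [mul_assoc]; gcongr; exact Submodule.norm_starProjection_apply_le _ G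
    _ ≤ ‖v‖⁻¹ :=
        mul_le_of_le_one_right (by positivity) (inv_mul_le_one_of_le₀ le_rfl (norm_nonneg G))

end

theorem stmt_2_general {E : Type*} [NormedAddCommGroup E] [InnerProductSpace ℝ E]
    [FiniteDimensional ℝ E] (M : ℝ) (hM : 0 < M) (F G : E)
    (hFM : M ≤ ‖F‖) :
    ‖gradient (fun v : E => ⟪v, G⟫_ℝ / (‖v‖ * ‖G‖)) F‖ ≤ 2 / M := by
  have hF : F ≠ 0 := norm_pos_iff.1 (hM.trans_le hFM)
  calc _ ≤ ‖F‖⁻¹ := norm_gradient_cosineSimilarity_le G hF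
    _ ≤ M⁻¹ := inv_anti₀ hM hFM
    _ ≤ 2 / M := by rw [inv_eq_one_div]; gcongr; norm_num

/-- For nonzero `F, G` in a finite-dimensional real inner product space
with `‖F‖ ≥ M > 0`, the gradient of the cosine-similarity map at `F` has norm at most `2 / M`. -/
theorem stmt_2 {E : Type*} [NormedAddCommGroup E] [InnerProductSpace ℝ E]
    [FiniteDimensional ℝ E] (M : ℝ) (hM : 0 < M) (F G : E) (hF : F ≠ 0) (hG : G ≠ 0)
    (hFM : M ≤ ‖F‖) :
    ‖gradient (fun v : E => ⟪v, G⟫_ℝ / (‖v‖ * ‖G‖)) F‖ ≤ 2 / M :=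
  stmt_2_general M hM F G hFM
end

section
/- Let M, L, d be positive natural numbers, let X ∈ ℝ^{M×d} with ‖X‖_F ≤ √d, let Z, Z* ∈ ℝ^{L×d}, W_Q, W_K, W_V ∈ ℝ^{d×d}, and let σ : ℝ^{M×L} → ℝ^{M×L} be Lipschitz with constant L_σ with respect to the Frobenius norm. Set Q = X·W_Q, K = Z·W_K, K* = Z*·W_K, V* = Z*·W_V, A = Q·Kᵀ/√d, B = Q·(K*)ᵀ/√d, and ΔZ = Z − Z*. Then ‖( σ(A) − σ(B) )·V*‖_F ≤ L_σ·‖W_Q‖₂·‖W_K‖₂·‖V*‖₂·‖ΔZ‖_F. -/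
/-!
The score difference factors as `A - B = (1/√d) · X · (W_Q ((Z - Z*) W_K)ᵀ)`. Computing the
Frobenius norm row by row gives `‖C V‖_F ≤ ‖C‖_F ‖V‖₂`, and Cauchy–Schwarz gives `‖·‖₂ ≤ ‖·‖_F`.
Hence `‖A - B‖_F ≤ (‖X‖_F / √d) ‖W_Q‖₂ ‖W_K‖₂ ‖Z - Z*‖_F`, where `‖X‖_F / √d ≤ 1`, and the
Lipschitz bound on `σ` followed by `‖(σ A - σ B) V*‖_F ≤ ‖σ A - σ B‖_F ‖V*‖₂` finishes the proof.
-/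

open Matrix

/-- Frobenius norm of a real matrix: `‖A‖_F = √(∑ i ∑ j A i j ²)`. -/
noncomputable def frobNorm {m n : Type*} [Fintype m] [Fintype n] (A : Matrix m n ℝ) : ℝ :=
  Real.sqrt (∑ i, ∑ j, (A i j) ^ 2)

/-- Spectral (`ℓ² → ℓ²` operator) norm of a real matrix. -/
noncomputable def specNorm {m n : Type*} [Fintype m] [Fintype n] [DecidableEq n]
    (A : Matrix m n ℝ) : ℝ :=
  ‖LinearMap.toContinuousLinearMap (Matrix.toEuclideanLin A)‖

open scoped Matrix.Norms.L2Operator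

variable {m n p : Type*} [Fintype m] [Fintype n] [Fintype p]

lemma frobNorm_eq_sqrt_sum_norm_row_sq (A : Matrix m n ℝ) :
    frobNorm A = √(∑ i, ‖WithLp.toLp 2 (A i)‖ ^ 2) := by
  simp only [frobNorm, EuclideanSpace.norm_sq_eq, Real.norm_eq_abs, sq_abs]

lemma frobNorm_sq_eq_sum_norm_row_sq (A : Matrix m n ℝ) :
    frobNorm A ^ 2 = ∑ i, ‖WithLp.toLp 2 (A i)‖ ^ 2 := by
  rw [frobNorm_eq_sqrt_sum_norm_row_sq, Real.sq_sqrt (by positivity)]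

lemma frobNorm_nonneg (A : Matrix m n ℝ) : 0 ≤ frobNorm A := Real.sqrt_nonneg _

lemma frobNorm_smul (c : ℝ) (A : Matrix m n ℝ) : frobNorm (c • A) = |c| * frobNorm A := by
  simp only [frobNorm, Matrix.smul_apply, smul_eq_mul, mul_pow, ← Finset.mul_sum]
  rw [Real.sqrt_mul (sq_nonneg c), Real.sqrt_sq_eq_abs]

lemma specNorm_nonneg [DecidableEq n] (A : Matrix m n ℝ) : 0 ≤ specNorm A := norm_nonneg _

lemma specNorm_transpose [DecidableEq m] [DecidableEq n] (A : Matrix m n ℝ) :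
    specNorm Aᵀ = specNorm A :=
  l2_opNorm_conjTranspose A

lemma specNorm_mul_le [DecidableEq n] [DecidableEq p] (A : Matrix m n ℝ) (B : Matrix n p ℝ) :
    specNorm (A * B) ≤ specNorm A * specNorm B :=
  l2_opNorm_mul A B

lemma frobNorm_mul_le [DecidableEq n] [DecidableEq p] (C : Matrix m n ℝ) (V : Matrix n p ℝ) :
    frobNorm (C * V) ≤ frobNorm C * specNorm V := by
  have hrow (i : m) : ‖WithLp.toLp 2 ((C * V) i)‖ ≤ specNorm V * ‖WithLp.toLp 2 (C i)‖ := by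
    rw [mul_apply_eq_vecMul, ← mulVec_transpose, ← specNorm_transpose]
    exact l2_opNorm_mulVec Vᵀ (WithLp.toLp 2 (C i))
  rw [frobNorm_eq_sqrt_sum_norm_row_sq,
    Real.sqrt_le_left (mul_nonneg (frobNorm_nonneg C) (specNorm_nonneg V)), mul_pow,
    frobNorm_sq_eq_sum_norm_row_sq, Finset.sum_mul]
  gcongr with i
  rw [← mul_pow, mul_comm]
  gcongr
  exact hrow i

lemma specNorm_le_frobNorm [DecidableEq n] (A : Matrix m n ℝ) : specNorm A ≤ frobNorm A := by
  refine ContinuousLinearMap.opNorm_le_bound _ (frobNorm_nonneg A) fun x => ?_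
  rw [← sq_le_sq₀ (norm_nonneg _) (mul_nonneg (frobNorm_nonneg A) (norm_nonneg x)), mul_pow,
    frobNorm_sq_eq_sum_norm_row_sq, Finset.sum_mul, EuclideanSpace.norm_sq_eq]
  gcongr with i
  have hrow : (A *ᵥ x) i = inner ℝ (WithLp.toLp 2 (A i)) x := by
    simp [mulVec, dotProduct, PiLp.inner_apply, mul_comm]
  change ‖(A *ᵥ x) i‖ ^ 2 ≤ _
  rw [← mul_pow, hrow, Real.norm_eq_abs]
  gcongr
  exact abs_real_inner_le_norm _ _

lemma frobNorm_mul_mul_transpose_sub_le {l q : Type*} [Fintype l] [Fintype q]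
    [DecidableEq n] [DecidableEq l] [DecidableEq p] [DecidableEq q]
    (X : Matrix m n ℝ) (WQ : Matrix n p ℝ) (Z Z' : Matrix l q ℝ) (WK : Matrix q p ℝ) :
    frobNorm (X * WQ * (Z * WK)ᵀ - X * WQ * (Z' * WK)ᵀ)
      ≤ frobNorm X * (specNorm WQ * specNorm WK * frobNorm (Z - Z')) := by
  have hfactor : X * WQ * (Z * WK)ᵀ - X * WQ * (Z' * WK)ᵀ = X * (WQ * ((Z - Z') * WK)ᵀ) := by
    rw [Matrix.sub_mul, transpose_sub, Matrix.mul_sub, Matrix.mul_sub, Matrix.mul_assoc,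
      Matrix.mul_assoc]
  rw [hfactor]
  refine (frobNorm_mul_le _ _).trans (mul_le_mul_of_nonneg_left ?_ (frobNorm_nonneg X))
  calc specNorm (WQ * ((Z - Z') * WK)ᵀ) ≤ specNorm WQ * specNorm ((Z - Z') * WK) := by
        rw [← specNorm_transpose ((Z - Z') * WK)]
        exact specNorm_mul_le _ _
    _ ≤ specNorm WQ * (specNorm (Z - Z') * specNorm WK) := by
        gcongr
        · exact specNorm_nonneg WQ
        · exact specNorm_mul_le _ _
    _ ≤ specNorm WQ * (frobNorm (Z - Z') * specNorm WK) := by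
        gcongr
        · exact specNorm_nonneg WQ
        · exact specNorm_nonneg WK
        · exact specNorm_le_frobNorm _
    _ = specNorm WQ * specNorm WK * frobNorm (Z - Z') := by ring

theorem stmt_14_general (M L d : ℕ) (X : Matrix (Fin M) (Fin d) ℝ) (hX : frobNorm X ≤ Real.sqrt d)
    (Z Zstar : Matrix (Fin L) (Fin d) ℝ)
    (WQ WK WV : Matrix (Fin d) (Fin d) ℝ)
    (σ : Matrix (Fin M) (Fin L) ℝ → Matrix (Fin M) (Fin L) ℝ)
    (Lσ : ℝ) (hLσ : 0 ≤ Lσ)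
    (hlip : ∀ A B : Matrix (Fin M) (Fin L) ℝ,
      frobNorm (σ A - σ B) ≤ Lσ * frobNorm (A - B)) :
    frobNorm ((σ ((1 / Real.sqrt d) • (X * WQ * (Z * WK)ᵀ))
          - σ ((1 / Real.sqrt d) • (X * WQ * (Zstar * WK)ᵀ))) * (Zstar * WV))
      ≤ Lσ * specNorm WQ * specNorm WK * specNorm (Zstar * WV)
          * frobNorm (Z - Zstar) := by
  set A := (1 / Real.sqrt d) • (X * WQ * (Z * WK)ᵀ)
  set B := (1 / Real.sqrt d) • (X * WQ * (Zstar * WK)ᵀ)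
  set bound := specNorm WQ * specNorm WK * frobNorm (Z - Zstar)
  have hbound : 0 ≤ bound := by
    positivity [specNorm_nonneg WQ, specNorm_nonneg WK, frobNorm_nonneg (Z - Zstar)]
  have hscores : frobNorm (A - B) ≤ bound := by
    rw [← smul_sub, frobNorm_smul, abs_of_nonneg (by positivity)]
    calc 1 / Real.sqrt d * frobNorm (X * WQ * (Z * WK)ᵀ - X * WQ * (Zstar * WK)ᵀ)
        ≤ 1 / Real.sqrt d * (Real.sqrt d * bound) := by
          gcongr
          exact (frobNorm_mul_mul_transpose_sub_le X WQ Z Zstar WK).trans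
            (mul_le_mul_of_nonneg_right hX hbound)
      _ ≤ bound := by
          rw [← mul_assoc, one_div]
          exact mul_le_of_le_one_left hbound inv_mul_le_one
  calc frobNorm ((σ A - σ B) * (Zstar * WV))
      ≤ frobNorm (σ A - σ B) * specNorm (Zstar * WV) := frobNorm_mul_le _ _
    _ ≤ Lσ * frobNorm (A - B) * specNorm (Zstar * WV) := by
        gcongr
        · exact specNorm_nonneg _
        · exact hlip A B
    _ ≤ Lσ * bound * specNorm (Zstar * WV) := by
        gcongr
        exact specNorm_nonneg _
    _ = Lσ * specNorm WQ * specNorm WK * specNorm (Zstar * WV) * frobNorm (Z - Zstar) := by ring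

/-- (Bound on Term A.) With `‖X‖_F ≤ √d`, `σ` Lipschitz with constant
`L_σ` in Frobenius norm, `Q = X·W_Q`, `K = Z·W_K`, `K* = Z*·W_K`, `V* = Z*·W_V`,
`A = Q·Kᵀ/√d`, `B = Q·(K*)ᵀ/√d`, and `ΔZ = Z − Z*`:
`‖(σ(A) − σ(B))·V*‖_F ≤ L_σ·‖W_Q‖₂·‖W_K‖₂·‖V*‖₂·‖ΔZ‖_F`. -/
theorem stmt_14 (M L d : ℕ) (hM : 0 < M) (hL : 0 < L) (hd : 0 < d)
    (X : Matrix (Fin M) (Fin d) ℝ) (hX : frobNorm X ≤ Real.sqrt d)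
    (Z Zstar : Matrix (Fin L) (Fin d) ℝ)
    (WQ WK WV : Matrix (Fin d) (Fin d) ℝ)
    (σ : Matrix (Fin M) (Fin L) ℝ → Matrix (Fin M) (Fin L) ℝ)
    (Lσ : ℝ) (hLσ : 0 ≤ Lσ)
    (hlip : ∀ A B : Matrix (Fin M) (Fin L) ℝ,
      frobNorm (σ A - σ B) ≤ Lσ * frobNorm (A - B)) :
    frobNorm ((σ ((1 / Real.sqrt d) • (X * WQ * (Z * WK)ᵀ))
          - σ ((1 / Real.sqrt d) • (X * WQ * (Zstar * WK)ᵀ))) * (Zstar * WV))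
      ≤ Lσ * specNorm WQ * specNorm WK * specNorm (Zstar * WV)
          * frobNorm (Z - Zstar) :=
  stmt_14_general M L d X hX Z Zstar WQ WK WV σ Lσ hLσ hlip
end
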